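/- Assume the cost c(x,y) = h(x−y) satisfies (H1)–(H3). Let u_1,…,u_n ∈ ℝ^d be distinct and x_1,…,x_n ∈ ℝ^d be distinct, with Q_n the empirical measure of u_1,…,u_n. Then for every j ∈ {1,…,n}, the finite sample breakdown point of T_{Q_n→P_n}(u_j) is at most TD(u_j;Q_n). -/

import Mathlib

open Filter MeasureTheory Bornology Topology Set
open scoped RealInnerProductSpace ENNReal BigOperators Classical

noncomputable section

abbrev Euc (d : ℕ) := EuclideanSpace ℝ (Fin d)

/-- The cost function `c(x,y) = h(x-y)`. -/
def cost {d : ℕ} (h : Euc d → ℝ) (x y : Euc d) : ℝ := h (x - y)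

/-- The truncated cone `Cone(r, θ, z, p)`. -/
def TruncCone {d : ℕ} (r θ : ℝ) (z p : Euc d) : Set (Euc d) :=
  {x | ‖x - p‖ * ‖z‖ * Real.cos (θ / 2) ≤ ⟪z, x - p⟫ ∧ ⟪z, x - p⟫ ≤ r * ‖z‖}

/-- (H1): `h` is strictly convex. -/
def H1 {d : ℕ} (h : Euc d → ℝ) : Prop := StrictConvexOn ℝ Set.univ h

/-- (H2): for every height `r > 0` and angle `θ ∈ (0, π)` there is `M > 0` such that for every
`p` with `‖p‖ > M` there is a truncated cone with vertex `p` on which `h` attains its maximum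
at `p`. -/
def H2 {d : ℕ} (h : Euc d → ℝ) : Prop :=
  ∀ r : ℝ, 0 < r → ∀ θ : ℝ, θ ∈ Set.Ioo 0 Real.pi → ∃ M : ℝ, 0 < M ∧
    ∀ p : Euc d, M < ‖p‖ → ∃ z : Euc d, z ≠ 0 ∧ ∀ x ∈ TruncCone r θ z p, h x ≤ h p

/-- (H3): `h(x)/‖x‖ → ∞` as `‖x‖ → ∞`. -/
def H3 {d : ℕ} (h : Euc d → ℝ) : Prop :=
  ∀ C : ℝ, ∃ R : ℝ, ∀ x : Euc d, R ≤ ‖x‖ → C * ‖x‖ ≤ h x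

/-- A function `f : ℝ^d → ℝ ∪ {-∞}` is `c`-concave if it is an infimum of functions
`x ↦ c(x,y) - t` over a nonempty family `𝒯` of pairs `(y,t)`. -/
def IsCConcave {d : ℕ} (h : Euc d → ℝ) (f : Euc d → EReal) : Prop :=
  ∃ T : Set (Euc d × ℝ), T.Nonempty ∧
    ∀ x : Euc d, f x = ⨅ p ∈ T, ((cost h x p.1 - p.2 : ℝ) : EReal)

/-- The `c`-superdifferential of `f`, as a subset of `ℝ^d × ℝ^d`. -/
def CSuperdiff {d : ℕ} (h : Euc d → ℝ) (f : Euc d → EReal) : Set (Euc d × Euc d) :=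
  {q | ∀ z : Euc d, f z ≤ f q.1 + ((cost h z q.2 - cost h q.1 q.2 : ℝ) : EReal)}

/-- `∂^c f(x)`. -/
def CSuperdiffAt {d : ℕ} (h : Euc d → ℝ) (f : Euc d → EReal) (x : Euc d) : Set (Euc d) :=
  {y | (x, y) ∈ CSuperdiff h f}

/-- `∂^c f(U) = ⋃_{x ∈ U} ∂^c f(x)`. -/
def CSuperdiffImg {d : ℕ} (h : Euc d → ℝ) (f : Euc d → EReal) (U : Set (Euc d)) :
    Set (Euc d) :=
  ⋃ x ∈ U, CSuperdiffAt h f x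

/-- `dom(f) = {x : f(x) > -∞}`. -/
def edom {d : ℕ} (f : Euc d → EReal) : Set (Euc d) := {x | f x ≠ ⊥}

/-- A sequence of sets escapes to the horizon if it eventually avoids every ball
`B_R(0)`. -/
def EscapesToHorizon {α : Type*} [Norm α] (A : ℕ → Set α) : Prop :=
  ∀ R : ℝ, 0 < R → ∃ N : ℕ, ∀ n, N ≤ n → ∀ a ∈ A n, R ≤ ‖a‖

/-- No subsequence of the sequence of sets escapes to the horizon. -/
def NoSubseqEscapes {α : Type*} [Norm α] (A : ℕ → Set α) : Prop :=
  ∀ φ : ℕ → ℕ, StrictMono φ → ¬ EscapesToHorizon fun k => A (φ k)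

/-- A Kantorovich potential for `(Q, P')`: a `c`-concave function `f` whose `c`-superdifferential
is `Q`-a.e. a singleton `{T x}` and whose (a.e. defined) selection `T` pushes `Q` forward
to `P'`. -/
def IsKantorovichPotential {d : ℕ} (h : Euc d → ℝ) (Q P' : Measure (Euc d))
    (f : Euc d → EReal) : Prop :=
  IsCConcave h f ∧ ∃ T : Euc d → Euc d,
    (∀ᵐ x ∂Q, CSuperdiffAt h f x = {T x}) ∧ Measure.map T Q = P'

/-- The Tukey depth `TD(u;Q) = inf_{v ∈ S^{d-1}} Q {x : ⟨v, x-u⟩ ≤ 0}`. -/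
def tukeyDepth {d : ℕ} (Q : Measure (Euc d)) (u : Euc d) : ℝ≥0∞ :=
  ⨅ v ∈ {v : Euc d | ‖v‖ = 1}, Q {x | ⟪v, x - u⟫ ≤ 0}

/-- The set `S_ε(u)` of possible values at `u` of `c`-superdifferentials of Kantorovich
potentials from `Q` to an `ε`-contamination of `P`. -/
def contamSet {d : ℕ} (h : Euc d → ℝ) (Q P : Measure (Euc d)) (ε : ℝ) (u : Euc d) :
    Set (Euc d) :=
  {y | ∃ μ : Measure (Euc d), IsProbabilityMeasure μ ∧ ∃ f : Euc d → EReal,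
    IsKantorovichPotential h Q (ENNReal.ofReal (1 - ε) • P + ENNReal.ofReal ε • μ) f ∧
    y ∈ CSuperdiffAt h f u}

/-- Breakdown point `BP(u) = inf {ε ∈ (0,1) : S_ε(u) is unbounded}`. -/
def breakdownPoint {d : ℕ} (h : Euc d → ℝ) (Q P : Measure (Euc d)) (u : Euc d) : ℝ≥0∞ :=
  ⨅ ε ∈ {ε : ℝ | 0 < ε ∧ ε < 1 ∧ ¬ IsBounded (contamSet h Q P ε u)}, ENNReal.ofReal ε

/-- `σ` is an optimal assignment for source points `u` and target points `x`. -/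
def IsOptAssign {d n : ℕ} (h : Euc d → ℝ) (u x : Fin n → Euc d)
    (σ : Equiv.Perm (Fin n)) : Prop :=
  ∀ τ : Equiv.Perm (Fin n), ∑ i, cost h (u i) (x (σ i)) ≤ ∑ i, cost h (u i) (x (τ i))

/-- The dataset `x'` shares at least `k` atoms (with multiplicity) with the dataset `x`
of distinct points. -/
def SharesAtoms {d n : ℕ} (x x' : Fin n → Euc d) (k : ℕ) : Prop :=
  ∃ s : Finset (Fin n), k ≤ s.card ∧ ∃ g : Fin n → Fin n,
    Set.InjOn g ↑s ∧ ∀ i ∈ s, x' (g i) = x i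

/-- The set of values `x'_{σ(j)}` over datasets `x'` sharing at least `n - ℓ` atoms with `x`
and optimal assignments `σ` for `(u, x')`. -/
def fsBadSet {d n : ℕ} (h : Euc d → ℝ) (u x : Fin n → Euc d) (j : Fin n) (ℓ : ℕ) :
    Set (Euc d) :=
  {y | ∃ (x' : Fin n → Euc d) (σ : Equiv.Perm (Fin n)),
    SharesAtoms x x' (n - ℓ) ∧ IsOptAssign h u x' σ ∧ y = x' (σ j)}

/-- Finite sample (replacement) breakdown point of `T_{Q_n → P_n}(u_j)`. -/
def finiteSampleBP {d n : ℕ} (h : Euc d → ℝ) (u x : Fin n → Euc d) (j : Fin n) : ℝ :=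
  ((sInf {ℓ : ℕ | 1 ≤ ℓ ∧ ℓ ≤ n ∧ ¬ IsBounded (fsBadSet h u x j ℓ)} : ℕ) : ℝ) / n

/-- Tukey depth of `a` with respect to the empirical measure of `u_1, …, u_n`. -/
def empTD {d n : ℕ} (u : Fin n → Euc d) (a : Euc d) : ℝ :=
  ⨅ v : {v : Euc d // ‖v‖ = 1},
    ((Finset.univ.filter fun i => ⟪(v : Euc d), u i - a⟫ ≤ 0).card : ℝ) / n

/-- Lower Tukey depth of `a` with respect to the empirical measure of `u_1, …, u_n`. -/
def empTDlt {d n : ℕ} (u : Fin n → Euc d) (a : Euc d) : ℝ :=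
  ⨅ v : {v : Euc d // ‖v‖ = 1},
    ((Finset.univ.filter fun i => ⟪(v : Euc d), u i - a⟫ < 0).card : ℝ) / n

/-- Points in general position: every subset of cardinality at most `d+1` is affinely
independent. -/
def InGeneralPosition {d n : ℕ} (u : Fin n → Euc d) : Prop :=
  ∀ s : Finset (Fin n), s.card ≤ d + 1 → AffineIndependent ℝ fun i : s => u (i : Fin n)

/-- Convex conjugate `h*(y) = sup_x (⟨x,y⟩ - h(x))`. -/
def convConj {d : ℕ} (h : Euc d → ℝ) (y : Euc d) : ℝ := ⨆ x : Euc d, (⟪x, y⟫ - h x)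

/-- Topological support of a measure. -/
def measSupport {d : ℕ} (Q : Measure (Euc d)) : Set (Euc d) :=
  {x | ∀ U : Set (Euc d), IsOpen U → x ∈ U → 0 < Q U}

/-- A set `Γ ⊂ ℝ^d × ℝ^d` is `c`-cyclically monotone. -/
def CCyclMono {d : ℕ} (h : Euc d → ℝ) (Γ : Set (Euc d × Euc d)) : Prop :=
  ∀ (N : ℕ) (p : Fin N → Euc d × Euc d), (∀ i, p i ∈ Γ) →
    ∀ τ : Equiv.Perm (Fin N),
      ∑ i, cost h (p i).1 (p i).2 ≤ ∑ i, cost h (p i).1 (p (τ i)).2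


/-!
Fix a unit vector `v` and let `B` be the set of `i` with `⟪v, u i - u j⟫ ≤ 0`; it contains `j`, and
`#B / n` is the empirical mass of the closed halfspace at `u j`. Replace the targets `x i`, `i ∈ B`, by a
single far point `u j - q`. If an optimal assignment sent `u j` to an unreplaced target then, by
counting, some `u a` with `⟪v, u a - u j⟫ > 0` would receive `u j - q`, and exchanging the targets of
`u j` and `u a` would save `h (q + (u a - u j)) - h q` up to a bounded amount. That saving can be made
arbitrarily large: let `q` maximize `⟪v, ·⟫` on a large sublevel set `{h ≤ c}`, which is compact by
superlinearity. Every `q + e` with `⟪v, e⟫ ≥ δ` lies strictly beyond the supporting hyperplane, and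
convexity of `h` on the ray from `0` through `q + e` gives `h (q + e) - c > γ δ / 8` as soon as
`{h ≤ c}` lies in the ball of radius `c / γ`. So `u j` is sent to `u j - q`, which is arbitrarily far
away, after only `#B` replacements.
-/

theorem ConvexOn.sub_mul_lt_mul_sub {E : Type*} [AddCommGroup E] [Module ℝ E] {f : E → ℝ}
    (hf : ConvexOn ℝ univ f) {w : E} {c t b : ℝ} (ht : 0 < t) (htb : t ≤ b)
    (hc : c < f ((t / b) • w)) :
    (b - t) * (c - f 0) < t * (f w - c) := by
  have hb : 0 < b := ht.trans_le htb
  have hconv := hf.2 (mem_univ 0) (mem_univ w) (sub_nonneg.2 ((div_le_one hb).2 htb))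
    (div_pos ht hb).le (sub_add_cancel 1 (t / b))
  rw [smul_zero, zero_add, smul_eq_mul, smul_eq_mul] at hconv
  have hscaled : b * f ((t / b) • w) ≤ (b - t) * f 0 + t * f w := by
    have := mul_le_mul_of_nonneg_left hconv hb.le
    rwa [mul_add, ← mul_assoc, ← mul_assoc, mul_sub, mul_one, mul_div_cancel₀ _ hb.ne'] at this
  nlinarith

theorem ConvexOn.add_lt_of_isMaxOn_inner {F : Type*} [NormedAddCommGroup F]
    [InnerProductSpace ℝ F] {f : F → ℝ} (hf : ConvexOn ℝ univ f) {v q e : F} {c γ δ : ℝ}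
    (hγ : 0 < γ) (hδ : 0 < δ) (hf0 : 2 * |f 0| ≤ c) (hγδ : γ * δ / 2 ≤ c)
    (hqmax : IsMaxOn (fun y => ⟪v, y⟫) {y | f y ≤ c} q) (hq0 : 0 ≤ ⟪v, q⟫)
    (hqγ : ⟪v, q⟫ ≤ c / γ) (he : δ ≤ ⟪v, e⟫) :
    c + γ * δ / 8 < f (q + e) := by
  set t := ⟪v, q⟫ + δ / 2 with htdef
  set b := ⟪v, q + e⟫ with hbdef
  have hb : b = ⟪v, q⟫ + ⟪v, e⟫ := inner_add_right v q e
  have ht : 0 < t := by linarith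
  have htb : t ≤ b := by linarith
  have hout : c < f ((t / b) • (q + e)) := by
    by_contra! hle
    have : ⟪v, (t / b) • (q + e)⟫ ≤ ⟪v, q⟫ := hqmax (show _ ∈ {y | f y ≤ c} from hle)
    rw [real_inner_smul_right, ← hbdef, div_mul_cancel₀ _ (ht.trans_le htb).ne'] at this
    linarith
  have hgrowth := hf.sub_mul_lt_mul_sub ht htb hout
  have hc : 0 < c := by nlinarith
  have hlow : δ / 2 * (c / 2) ≤ (b - t) * (c - f 0) :=
    mul_le_mul (by linarith) (by linarith [le_abs_self (f 0)]) (by positivity) (by linarith)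
  have hpos : 0 < f (q + e) - c := pos_of_mul_pos_right (by nlinarith) ht.le
  have hup : t * (f (q + e) - c) ≤ 2 * c / γ * (f (q + e) - c) := by
    refine mul_le_mul_of_nonneg_right ?_ hpos.le
    rw [mul_div_assoc]
    linarith [show δ / 2 ≤ c / γ from (le_div_iff₀ hγ).2 (by linarith)]
  have : γ * δ / 8 < f (q + e) - c := by
    refine lt_of_mul_lt_mul_right (a := 2 * c / γ) ?_ (by positivity)
    rw [show γ * δ / 8 * (2 * c / γ) = δ / 2 * (c / 2) by field_simp; ring]
    linarith
  linarith

section Superlinear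

variable {d : ℕ} {h : Euc d → ℝ}

theorem H3.exists_norm_le_div (h3 : H3 h) {γ : ℝ} (hγ : 0 < γ) :
    ∃ c₀, ∀ c, c₀ ≤ c → ∀ y, h y ≤ c → ‖y‖ ≤ c / γ := by
  obtain ⟨R, hR⟩ := h3 γ
  refine ⟨γ * R, fun c hc y hy => (le_div_iff₀ hγ).2 ?_⟩
  rcases le_or_gt R ‖y‖ with hRy | hRy
  · linarith [hR y hRy]
  · nlinarith

theorem exists_far_add_gt (hh : ConvexOn ℝ univ h) (h3 : H3 h) {v : Euc d} (hv : ‖v‖ = 1)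
    {δ : ℝ} (hδ : 0 < δ) (C R : ℝ) :
    ∃ q, R < ‖q‖ ∧ ∀ e, δ ≤ ⟪v, e⟫ → h q + C < h (q + e) := by
  set γ := 8 * (|C| + 1) / δ
  have hγ : 0 < γ := by positivity
  have hCγ : C < γ * δ / 8 := by
    have : γ * δ = 8 * (|C| + 1) := div_mul_cancel₀ _ hδ.ne'
    linarith [le_abs_self C]
  obtain ⟨c₀, hc₀⟩ := h3.exists_norm_le_div hγ
  set p₀ := (max R 0 + 1) • v
  set c := max (max c₀ (2 * |h 0|)) (max (γ * δ / 2) (h p₀))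
  have hc₀c : c₀ ≤ c := le_max_of_le_left (le_max_left _ _)
  have hp₀c : h p₀ ≤ c := le_max_of_le_right (le_max_right _ _)
  have hcont : Continuous h := continuousOn_univ.1 (hh.continuousOn isOpen_univ)
  have hL : IsCompact {y | h y ≤ c} :=
    Metric.isCompact_of_isClosed_isBounded (isClosed_le hcont continuous_const)
      (isBounded_iff_forall_norm_le.2 ⟨c / γ, hc₀ c hc₀c⟩)
  have hvcont : Continuous fun y : Euc d => ⟪v, y⟫ := continuous_const.inner continuous_id
  obtain ⟨q, hqc, hqmax⟩ := hL.exists_isMaxOn ⟨p₀, hp₀c⟩ hvcont.continuousOn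
  have hvq_le : ⟪v, q⟫ ≤ ‖q‖ := by simpa [hv] using real_inner_le_norm v q
  have hp₀q : max R 0 + 1 ≤ ⟪v, q⟫ := by
    have := hqmax (show p₀ ∈ {y | h y ≤ c} from hp₀c)
    simpa [p₀, real_inner_smul_right, real_inner_self_eq_norm_sq, hv] using this
  refine ⟨q, by linarith [le_max_left R 0], fun e he => ?_⟩
  have hgrowth := hh.add_lt_of_isMaxOn_inner hγ hδ (le_max_of_le_left (le_max_right _ _))
    (le_max_of_le_right (le_max_left _ _)) hqmax (by linarith [le_max_right R 0])
    (hvq_le.trans (hc₀ c hc₀c q hqc)) he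
  linarith [show h q ≤ c from hqc]

end Superlinear

theorem Equiv.Perm.exists_notMem_apply_mem {α : Type*} (σ : Equiv.Perm α) {B : Finset α} {j : α}
    (hj : j ∈ B) (hσj : σ j ∉ B) : ∃ a ∉ B, σ a ∈ B := by
  by_contra! hcon
  have hsub : B.map σ.symm.toEmbedding ⊆ B := fun a ha => by
    by_contra haB
    exact hcon a haB (by simpa using Finset.mem_map_equiv.1 ha)
  have hB : B.map σ.symm.toEmbedding = B :=
    Finset.eq_of_subset_of_card_le hsub (Finset.card_map _).ge
  rw [← hB] at hj
  exact hσj (by simpa using Finset.mem_map_equiv.1 hj)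

section Assignment

variable {d n : ℕ} {h : Euc d → ℝ}

theorem exists_isOptAssign (h : Euc d → ℝ) (u x : Fin n → Euc d) :
    ∃ σ, IsOptAssign h u x σ := by
  obtain ⟨σ, -, hσ⟩ := Finset.exists_min_image Finset.univ
    (fun τ : Equiv.Perm (Fin n) => ∑ i, cost h (u i) (x (τ i))) Finset.univ_nonempty
  exact ⟨σ, fun τ => hσ τ (Finset.mem_univ τ)⟩

theorem IsOptAssign.add_le_swap {u x : Fin n → Euc d} {σ : Equiv.Perm (Fin n)}
    (hσ : IsOptAssign h u x σ) (i k : Fin n) :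
    cost h (u i) (x (σ i)) + cost h (u k) (x (σ k)) ≤
      cost h (u i) (x (σ k)) + cost h (u k) (x (σ i)) := by
  rcases eq_or_ne i k with rfl | hik
  · exact le_rfl
  have hdiff := Fintype.sum_eq_add i k hik
    (f := fun l => cost h (u l) (x ((σ * Equiv.swap i k) l)) - cost h (u l) (x (σ l)))
    fun l hl => by simp [Equiv.swap_apply_of_ne_of_ne hl.1 hl.2]
  simp only [Finset.sum_sub_distrib, Equiv.Perm.mul_apply, Equiv.swap_apply_left,
    Equiv.swap_apply_right] at hdiff
  have hopt := hσ (σ * Equiv.swap i k)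
  simp only [Equiv.Perm.mul_apply] at hopt
  linarith

theorem sharesAtoms_ite (x : Fin n → Euc d) (B : Finset (Fin n)) (y : Euc d) :
    SharesAtoms x (fun i => if i ∈ B then y else x i) (n - B.card) :=
  ⟨Bᶜ, by rw [Finset.card_compl, Fintype.card_fin], id, injOn_id _,
    fun _ hi => if_neg (Finset.mem_compl.1 hi)⟩

theorem not_isBounded_fsBadSet (hh : ConvexOn ℝ univ h) (h3 : H3 h) (u x : Fin n → Euc d)
    (j : Fin n) {v : Euc d} (hv : ‖v‖ = 1) :
    ¬ IsBounded (fsBadSet h u x j (Finset.univ.filter fun i => ⟪v, u i - u j⟫ ≤ 0).card) := by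
  set B := Finset.univ.filter fun i => ⟪v, u i - u j⟫ ≤ 0
  obtain ⟨C, hC⟩ := Finite.exists_le fun p : Fin n × Fin n =>
    cost h (u p.1) (x p.2) - cost h (u j) (x p.2)
  obtain ⟨δ, hδ, hδB⟩ : ∃ δ > 0, ∀ a ∉ B, δ ≤ ⟪v, u a - u j⟫ := by
    have hev : ∀ᶠ δ in 𝓝[>] (0 : ℝ), ∀ a, a ∉ B → δ ≤ ⟪v, u a - u j⟫ :=
      eventually_all.2 fun a => by
        by_cases ha : a ∈ B
        · simp [ha]
        · have hpos : 0 < ⟪v, u a - u j⟫ := by simpa [B] using ha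
          filter_upwards [Ioo_mem_nhdsGT hpos] with δ hδ using fun _ => hδ.2.le
    exact (eventually_mem_nhdsWithin.and hev).exists
  rw [isBounded_iff_forall_norm_le]
  push Not
  intro R
  obtain ⟨q, hqR, hq⟩ := exists_far_add_gt hh h3 hv hδ C (R + ‖u j‖)
  set x' := fun i => if i ∈ B then u j - q else x i
  obtain ⟨σ, hσ⟩ := exists_isOptAssign h u x'
  have hσj : σ j ∈ B := by
    by_contra hσj
    obtain ⟨a, ha, hσa⟩ := σ.exists_notMem_apply_mem (by simp [B]) hσj
    have hswap := hσ.add_le_swap j a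
    simp only [x', if_pos hσa, if_neg hσj, cost, sub_sub_cancel,
      show u a - (u j - q) = q + (u a - u j) by abel] at hswap
    have := hC (a, σ j)
    simp only [cost] at this
    linarith [hq (u a - u j) (hδB a ha)]
  refine ⟨x' (σ j), ⟨x', σ, sharesAtoms_ite x B _, hσ, rfl⟩, ?_⟩
  simp only [x', if_pos hσj]
  calc R < ‖q‖ - ‖u j‖ := by linarith
    _ ≤ ‖u j - q‖ := by rw [norm_sub_rev]; exact norm_sub_norm_le q (u j)

theorem finiteSampleBP_le_of_not_isBounded {u x : Fin n → Euc d} {j : Fin n} {ℓ : ℕ}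
    (hℓ : 1 ≤ ℓ) (hℓn : ℓ ≤ n) (hunb : ¬ IsBounded (fsBadSet h u x j ℓ)) :
    finiteSampleBP h u x j ≤ ℓ / n := by
  unfold finiteSampleBP
  gcongr
  exact Nat.sInf_le ⟨hℓ, hℓn, hunb⟩

end Assignment

theorem finiteSampleBP_le_tukeyDepth_general (d n : ℕ) (hd : 1 ≤ d) (h : Euc d → ℝ)
    (h1 : H1 h) (h3 : H3 h)
    (u x : Fin n → Euc d)
    (j : Fin n) :
    finiteSampleBP h u x j ≤ empTD u (u j) := by
  have : Nonempty {v : Euc d // ‖v‖ = 1} :=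
    ⟨⟨EuclideanSpace.single ⟨0, hd⟩ 1, by simp⟩⟩
  refine le_ciInf fun v => finiteSampleBP_le_of_not_isBounded ?_ ?_
    (not_isBounded_fsBadSet h1.convexOn h3 u x j v.2)
  · exact Finset.card_pos.2 ⟨j, by simp⟩
  · exact (Finset.card_filter_le _ _).trans_eq (Finset.card_fin n)

/-- the finite sample breakdown point of `T_{Q_n→P_n}(u_j)` is at most
`TD(u_j;Q_n)`. -/
theorem finiteSampleBP_le_tukeyDepth (d n : ℕ) (hd : 1 ≤ d) (h : Euc d → ℝ)
    (hpos : ∀ x, 0 ≤ h x) (h1 : H1 h) (h2 : H2 h) (h3 : H3 h)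
    (u x : Fin n → Euc d) (hu : Function.Injective u) (hx : Function.Injective x)
    (j : Fin n) :
    finiteSampleBP h u x j ≤ empTD u (u j) :=
  finiteSampleBP_le_tukeyDepth_general d n hd h h1 h3 u x j

end
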